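/- Let H be a connected m-uniform hypergraph on a finite vertex set V with edge set E, and let φ be a permutation voltage assignment in S_2 on the incidence graph B_H. Then the derived hypergraph H_B^φ (a 2-fold covering of H) is connected if and only if B_H contains a cycle with an odd number of edges to which φ assigns the transposition (12). -/

import Mathlib

open SimpleGraph Finset

/-- The "adjacency" simple graph of a hypergraph with edge set `E`: two distinct vertices
are adjacent iff they lie in a common edge.  The hypergraph is connected iff this graph is. -/
def hypAdj {V : Type*} (E : Finset (Finset V)) : SimpleGraph V :=
  SimpleGraph.fromRel (fun u v => ∃ e ∈ E, u ∈ e ∧ v ∈ e)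

/-- The edge set of the derived hypergraph `H_B^φ` of a hypergraph with edge set `E` and a
permutation voltage assignment `φ` in `S_k` on the incidence graph: for `e ∈ E` and
`j ∈ {1,…,k}`, the edge `(e,j)` is the set `{(u, φ(u,e)(j)) : u ∈ e}`. -/
def derivedEdges {V : Type*} [DecidableEq V] {k : ℕ}
    (E : Finset (Finset V)) (φ : V → Finset V → Equiv.Perm (Fin k)) :
    Finset (Finset (V × Fin k)) :=
  (E ×ˢ (Finset.univ : Finset (Fin k))).image
    (fun p => p.1.image (fun u => (u, φ u p.1 p.2)))

/-- The incidence graph `B_H`: bipartite graph on `V ⊔ E` where `v` and `e` are adjacent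
iff `v ∈ e`. -/
def incGraph {V : Type*} (E : Finset (Finset V)) : SimpleGraph (V ⊕ {e // e ∈ E}) :=
  SimpleGraph.fromRel (fun a b =>
    ∃ (v : V) (e : {e // e ∈ E}), a = Sum.inl v ∧ b = Sum.inr e ∧ v ∈ e.1)

/-- The voltages on ordered pairs of vertices of the incidence graph determined by a
permutation voltage assignment `φ` on incident pairs `(v,e)`, with `φ(e,v) = φ(v,e)⁻¹`. -/
def incVolt {V : Type*} {k : ℕ} (E : Finset (Finset V))
    (φ : V → Finset V → Equiv.Perm (Fin k)) :
    (V ⊕ {e // e ∈ E}) → (V ⊕ {e // e ∈ E}) → Equiv.Perm (Fin k)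
  | Sum.inl v, Sum.inr e => φ v e.1
  | Sum.inr e, Sum.inl v => (φ v e.1)⁻¹
  | _, _ => 1

/-- The voltage `φ(W) = φ(w₀,w₁)φ(w₁,w₂)⋯φ(w_{t−1},w_t)` of a walk `W = w₀w₁⋯w_t`. -/
def walkVoltage {V : Type*} {k : ℕ} {G : SimpleGraph V}
    (φ : V → V → Equiv.Perm (Fin k)) {u v : V} (W : G.Walk u v) : Equiv.Perm (Fin k) :=
  (W.darts.map (fun d => φ d.fst d.snd)).prod

/-- The number of edges of a walk to which the `S_2`-voltage assignment assigns the
transposition `(12)`. -/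
def swapCount {V : Type*} {G : SimpleGraph V}
    (φ : V → V → Equiv.Perm (Fin 2)) {u v : V} (W : G.Walk u v) : ℕ :=
  (W.darts.filter (fun d => φ d.fst d.snd = Equiv.swap 0 1)).length

private lemma perm2_cases (g : Equiv.Perm (Fin 2)) : g = 1 ∨ g = Equiv.swap 0 1 := by
  revert g; decide

private lemma perm2_comm (a b : Equiv.Perm (Fin 2)) : a * b = b * a := by revert a b; decide

private lemma fin2_ne {a b : Fin 2} (h : a ≠ b) : a = Equiv.swap 0 1 b := by
  revert a b; decide

private lemma swap_ne_one : (Equiv.swap (0:Fin 2) 1) ≠ 1 := by decide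

private lemma one_ne_swap : (1 : Equiv.Perm (Fin 2)) ≠ Equiv.swap 0 1 := by decide

private lemma swap_sq : (Equiv.swap (0:Fin 2) 1) ^ 2 = 1 := by decide

private lemma prod_perm2 (l : List (Equiv.Perm (Fin 2))) :
    l.prod = (Equiv.swap 0 1) ^ (l.filter (fun g => g = Equiv.swap 0 1)).length := by
  induction l with
  | nil => simp
  | cons a l ih =>
    rcases perm2_cases a with h | h <;> subst h <;>
      simp [List.filter_cons, ih, pow_succ, perm2_comm, swap_ne_one, one_ne_swap]

private lemma walkVoltage_eq_pow {V : Type*} {G : SimpleGraph V}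
    (φ : V → V → Equiv.Perm (Fin 2)) {u v : V} (W : G.Walk u v) :
    walkVoltage φ W = Equiv.swap 0 1 ^ swapCount φ W := by
  rw [walkVoltage, prod_perm2, swapCount]
  congr 1
  rw [List.filter_map, List.length_map]
  rfl

private lemma voltage_of_odd {V : Type*} {G : SimpleGraph V}
    (φ : V → V → Equiv.Perm (Fin 2)) {u v : V} {W : G.Walk u v}
    (h : Odd (swapCount φ W)) : walkVoltage φ W = Equiv.swap 0 1 := by
  rw [walkVoltage_eq_pow]
  obtain ⟨k, hk⟩ := h
  rw [hk, pow_add, pow_mul, swap_sq, one_pow, one_mul, pow_one]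

private lemma odd_of_voltage {V : Type*} {G : SimpleGraph V}
    (φ : V → V → Equiv.Perm (Fin 2)) {u v : V} {W : G.Walk u v}
    (h : walkVoltage φ W = Equiv.swap 0 1) : Odd (swapCount φ W) := by
  rcases Nat.even_or_odd (swapCount φ W) with he | ho
  · exfalso
    rw [walkVoltage_eq_pow] at h
    obtain ⟨k, hk⟩ := he
    rw [hk, ← two_mul, pow_mul, swap_sq, one_pow] at h
    exact swap_ne_one h.symm
  · exact ho

private lemma walkVoltage_nil {V : Type*} {k : ℕ} {G : SimpleGraph V}
    (φ : V → V → Equiv.Perm (Fin k)) {u : V} :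
    walkVoltage φ (SimpleGraph.Walk.nil : G.Walk u u) = 1 := rfl

private lemma walkVoltage_cons {V : Type*} {k : ℕ} {G : SimpleGraph V}
    (φ : V → V → Equiv.Perm (Fin k)) {x y z : V} (h : G.Adj x y) (p : G.Walk y z) :
    walkVoltage φ (SimpleGraph.Walk.cons h p) = φ x y * walkVoltage φ p := by
  simp [walkVoltage]

private lemma walkVoltage_append {V : Type*} {k : ℕ} {G : SimpleGraph V}
    (φ : V → V → Equiv.Perm (Fin k)) {x y z : V} (p : G.Walk x y) (q : G.Walk y z) :
    walkVoltage φ (p.append q) = walkVoltage φ p * walkVoltage φ q := by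
  simp [walkVoltage, SimpleGraph.Walk.darts_append]

private lemma walkVoltage_reverse {V : Type*} {k : ℕ} {G : SimpleGraph V}
    (φ : V → V → Equiv.Perm (Fin k)) (hsym : ∀ a b, φ b a = (φ a b)⁻¹)
    {u v : V} (W : G.Walk u v) :
    walkVoltage φ W.reverse = (walkVoltage φ W)⁻¹ := by
  rw [walkVoltage, walkVoltage, SimpleGraph.Walk.darts_reverse, List.map_reverse,
    List.map_map, List.prod_inv_reverse, List.map_map]
  congr 1
  congr 1
  apply List.map_congr_left
  intro d _
  simp only [Function.comp_apply]
  exact hsym d.fst d.snd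

private lemma swapCount_append {V : Type*} {G : SimpleGraph V}
    (φ : V → V → Equiv.Perm (Fin 2)) {x y z : V} (p : G.Walk x y) (q : G.Walk y z) :
    swapCount φ (p.append q) = swapCount φ p + swapCount φ q := by
  simp [swapCount, SimpleGraph.Walk.darts_append]

section
variable {V' : Type*} {G : SimpleGraph V'}

private lemma endpoint_edge_not_mem {x y : V'}
    (P : G.Walk y x) (hP : P.IsPath) (hlen : 2 ≤ P.length) : s(x, y) ∉ P.edges := by
  intro hmem
  have hR : P.reverse.IsPath := hP.reverse
  have hmem' : s(x, y) ∈ P.reverse.edges := by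
    rw [SimpleGraph.Walk.edges_reverse]; simpa using hmem
  have hnn : ¬ P.reverse.Nil := by
    rw [SimpleGraph.Walk.nil_iff_length_eq, SimpleGraph.Walk.length_reverse]; omega
  obtain ⟨z, h, Q, hQ⟩ := SimpleGraph.Walk.not_nil_iff.mp hnn
  rw [hQ] at hR hmem'
  rw [SimpleGraph.Walk.edges_cons, List.mem_cons] at hmem'
  rw [SimpleGraph.Walk.cons_isPath_iff] at hR
  rcases hmem' with h1 | h1
  · rw [Sym2.eq_iff] at h1
    rcases h1 with ⟨-, rfl⟩ | ⟨rfl, rfl⟩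
    · have hnil := (SimpleGraph.Walk.isPath_iff_eq_nil (p := Q)).mp hR.1
      have hleneq := congrArg SimpleGraph.Walk.length hQ
      rw [SimpleGraph.Walk.length_reverse, hnil] at hleneq
      simp at hleneq
      omega
    · exact G.loopless.irrefl _ h
  · exact hR.2 (SimpleGraph.Walk.fst_mem_support_of_mem_edges Q h1)

end

private lemma exists_cycle_of_odd_closed {V' : Type*} [DecidableEq V'] {G : SimpleGraph V'}
    (φ : V' → V' → Equiv.Perm (Fin 2)) (hsym : ∀ a b, φ b a = (φ a b)⁻¹) :
    ∀ (n : ℕ) (x : V') (W : G.Walk x x), W.length = n → Odd (swapCount φ W) →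
      ∃ (a : V') (C : G.Walk a a), C.IsCycle ∧ Odd (swapCount φ C) := by
  intro n
  induction n using Nat.strong_induction_on with
  | _ n ih =>
    intro x W hlen hodd
    by_cases hnd : W.support.tail.Nodup
    · -- potentially a cycle
      cases W with
      | nil => simp [swapCount, Nat.odd_iff] at hodd
      | cons h P =>
        rename_i y
        cases P with
        | nil => exact absurd rfl h.ne
        | cons h' P' =>
          cases P' with
          | nil =>
            -- two-step closed walk: even swap count
            exfalso
            by_cases hφ : φ x y = Equiv.swap 0 1
            · have hφ' : φ y x = Equiv.swap 0 1 := by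
                rw [hsym x y, hφ]; decide
              simp [swapCount, List.filter_cons, hφ, hφ', Nat.odd_iff] at hodd
            · have hφ' : φ y x ≠ Equiv.swap 0 1 := by
                rw [hsym x y]
                intro hc
                exact hφ (by rw [← inv_inv (φ x y), hc]; decide)
              simp [swapCount, List.filter_cons, hφ, hφ', Nat.odd_iff] at hodd
          | cons h'' P'' =>
            refine ⟨x, SimpleGraph.Walk.cons h (SimpleGraph.Walk.cons h' (SimpleGraph.Walk.cons h'' P'')), ?_, hodd⟩
            rw [SimpleGraph.Walk.cons_isCycle_iff]
            have hpath : (SimpleGraph.Walk.cons h' (SimpleGraph.Walk.cons h'' P'')).IsPath := by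
              rw [SimpleGraph.Walk.isPath_def]
              rw [SimpleGraph.Walk.support_cons, List.tail_cons] at hnd
              exact hnd
            refine ⟨hpath, endpoint_edge_not_mem _ hpath (by simp)⟩
    · -- repeated internal vertex: split
      rw [← List.exists_duplicate_iff_not_nodup] at hnd
      obtain ⟨b, hb⟩ := hnd
      have hcount : 2 ≤ W.support.tail.count b := List.duplicate_iff_two_le_count.mp hb
      have hbmem : b ∈ W.support := by
        rw [SimpleGraph.Walk.support_eq_cons]
        exact List.mem_cons_of_mem _ hb.mem
      have hdarts : List.Perm (W.rotate b hbmem).darts W.darts :=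
        (SimpleGraph.Walk.rotate_darts W b hbmem).perm
      have hcount2 : swapCount φ (W.rotate b hbmem) = swapCount φ W := by
        unfold swapCount; exact (hdarts.filter _).length_eq
      have hlen2 : (W.rotate b hbmem).length = n := by
        rw [← hlen, ← SimpleGraph.Walk.length_darts, ← SimpleGraph.Walk.length_darts]
        exact hdarts.length_eq
      have hsup : List.Perm (W.rotate b hbmem).support.tail W.support.tail :=
        (SimpleGraph.Walk.support_rotate W b hbmem).perm
      have hcountb : 2 ≤ (W.rotate b hbmem).support.tail.count b := by
        rw [hsup.count_eq]; exact hcount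
      have hn1 : 1 ≤ n := by
        have h1 : swapCount φ W ≤ n := by
          rw [← hlen, ← SimpleGraph.Walk.length_darts]
          exact List.length_filter_le _ _
        rcases hodd with ⟨k, hk⟩; omega
      have hnn : ¬ (W.rotate b hbmem).Nil := by
        rw [SimpleGraph.Walk.nil_iff_length_eq, hlen2]; omega
      obtain ⟨c, hadj, P, hP⟩ := SimpleGraph.Walk.not_nil_iff.mp hnn
      have htail : (W.rotate b hbmem).support.tail = P.support := by
        rw [hP, SimpleGraph.Walk.support_cons, List.tail_cons]
      have hbP : b ∈ P.support := by
        have : 0 < P.support.count b := by rw [← htail]; omega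
        exact List.count_pos_iff.mp this
      have hspec : (P.takeUntil b hbP).append (P.dropUntil b hbP) = P :=
        SimpleGraph.Walk.take_spec P hbP
      have hcntA : (P.takeUntil b hbP).support.count b = 1 :=
        SimpleGraph.Walk.count_support_takeUntil_eq_one P hbP
      have hPsup : P.support = (P.takeUntil b hbP).support ++ (P.dropUntil b hbP).support.tail := by
        conv_lhs => rw [← hspec]
        rw [SimpleGraph.Walk.support_append]
      have hBtail : 1 ≤ (P.dropUntil b hbP).support.tail.count b := by
        have h2 : 2 ≤ P.support.count b := by rw [← htail]; omega
        rw [hPsup, List.count_append, hcntA] at h2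
        omega
      have hBlen : 1 ≤ (P.dropUntil b hbP).length := by
        have hl1 : (P.dropUntil b hbP).support.tail.count b ≤
            (P.dropUntil b hbP).support.tail.length := List.count_le_length
        have hl2 : (P.dropUntil b hbP).support.tail.length = (P.dropUntil b hbP).length := by
          rw [List.length_tail, SimpleGraph.Walk.length_support]
          omega
        omega
      have hWdarts : (W.rotate b hbmem).darts =
          (SimpleGraph.Walk.cons hadj (P.takeUntil b hbP)).darts ++ (P.dropUntil b hbP).darts := by
        rw [hP, SimpleGraph.Walk.darts_cons, SimpleGraph.Walk.darts_cons]
        conv_lhs => rw [← hspec]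
        rw [SimpleGraph.Walk.darts_append]
        rfl
      have hsplit : swapCount φ (W.rotate b hbmem) =
          swapCount φ (SimpleGraph.Walk.cons hadj (P.takeUntil b hbP)) +
            swapCount φ (P.dropUntil b hbP) := by
        unfold swapCount
        rw [hWdarts, List.filter_append, List.length_append]
      have hlenP : n = 1 + (P.takeUntil b hbP).length + (P.dropUntil b hbP).length := by
        rw [← hlen2, hP, SimpleGraph.Walk.length_cons]
        conv_lhs => rw [← hspec]
        rw [SimpleGraph.Walk.length_append]
        omega
      rw [← hcount2, hsplit] at hodd
      rcases Nat.even_or_odd (swapCount φ (P.dropUntil b hbP)) with hev | hod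
      · have hoddA : Odd (swapCount φ (SimpleGraph.Walk.cons hadj (P.takeUntil b hbP))) := by
          rcases hev with ⟨k, hk⟩; rcases hodd with ⟨k', hk'⟩
          exact ⟨k' - k, by omega⟩
        exact ih _ (by rw [SimpleGraph.Walk.length_cons]; omega) b _ rfl hoddA
      · exact ih _ (by omega) b _ rfl hod


section Graphs
variable {V : Type*} [DecidableEq V] {E : Finset (Finset V)}
  {φ : V → Finset V → Equiv.Perm (Fin 2)}

private lemma incVolt_symm (a b : V ⊕ {e // e ∈ E}) :
    incVolt E φ b a = (incVolt E φ a b)⁻¹ := by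
  cases a <;> cases b <;> simp [incVolt]

private lemma incAdj_inl_inr {u : V} {e : {e // e ∈ E}} (h : u ∈ e.1) :
    (incGraph E).Adj (Sum.inl u) (Sum.inr e) := by
  rw [incGraph, SimpleGraph.fromRel_adj]
  exact ⟨by simp, Or.inl ⟨u, e, rfl, rfl, h⟩⟩

private lemma incAdj_elim {a b : V ⊕ {e // e ∈ E}} (h : (incGraph E).Adj a b) :
    (∃ u e, a = Sum.inl u ∧ b = Sum.inr e ∧ u ∈ e.1) ∨
      (∃ u e, a = Sum.inr e ∧ b = Sum.inl u ∧ u ∈ e.1) := by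
  rw [incGraph, SimpleGraph.fromRel_adj] at h
  rcases h.2 with ⟨v, e, h1, h2, h3⟩ | ⟨v, e, h1, h2, h3⟩
  · exact Or.inl ⟨v, e, h1, h2, h3⟩
  · exact Or.inr ⟨v, e, h2, h1, h3⟩

private lemma mem_derived_edge {e : Finset V} {t : Fin 2} {u : V} {i : Fin 2} :
    (u, i) ∈ e.image (fun v => (v, φ v e t)) ↔ u ∈ e ∧ i = φ u e t := by
  simp only [Finset.mem_image, Prod.mk.injEq]
  constructor
  · rintro ⟨v, hv, rfl, rfl⟩; exact ⟨hv, rfl⟩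
  · rintro ⟨hu, rfl⟩; exact ⟨u, hu, rfl, rfl⟩

private lemma derivedAdj_iff {u w : V} {i j : Fin 2} :
    (hypAdj (derivedEdges E φ)).Adj (u, i) (w, j) ↔
      ((u, i) : V × Fin 2) ≠ (w, j) ∧
        ∃ e ∈ E, ∃ t : Fin 2, u ∈ e ∧ w ∈ e ∧ i = φ u e t ∧ j = φ w e t := by
  rw [hypAdj, SimpleGraph.fromRel_adj]
  constructor
  · rintro ⟨hne, hrel | hrel⟩
    · obtain ⟨d, hd, hud, hwd⟩ := hrel
      rw [derivedEdges, Finset.mem_image] at hd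
      obtain ⟨⟨e, t⟩, hp, rfl⟩ := hd
      rw [Finset.mem_product] at hp
      obtain ⟨hu1, hi1⟩ := mem_derived_edge.mp hud
      obtain ⟨hw1, hj1⟩ := mem_derived_edge.mp hwd
      exact ⟨hne, e, hp.1, t, hu1, hw1, hi1, hj1⟩
    · obtain ⟨d, hd, hwd, hud⟩ := hrel
      rw [derivedEdges, Finset.mem_image] at hd
      obtain ⟨⟨e, t⟩, hp, rfl⟩ := hd
      rw [Finset.mem_product] at hp
      obtain ⟨hu1, hi1⟩ := mem_derived_edge.mp hud
      obtain ⟨hw1, hj1⟩ := mem_derived_edge.mp hwd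
      exact ⟨hne, e, hp.1, t, hu1, hw1, hi1, hj1⟩
  · rintro ⟨hne, e, he, t, hu, hw, hi, hj⟩
    refine ⟨hne, Or.inl ⟨e.image (fun v => (v, φ v e t)), ?_, ?_, ?_⟩⟩
    · rw [derivedEdges, Finset.mem_image]
      exact ⟨(e, t), Finset.mem_product.mpr ⟨he, Finset.mem_univ t⟩, rfl⟩
    · exact mem_derived_edge.mpr ⟨hu, hi⟩
    · exact mem_derived_edge.mpr ⟨hw, hj⟩

end Graphs

set_option linter.unusedSectionVars false

section Graphs2
variable {V : Type*} [DecidableEq V] {E : Finset (Finset V)}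
  {φ : V → Finset V → Equiv.Perm (Fin 2)}

/-- Lifting a walk of the incidence graph to a reachability in the derived hypergraph. -/
private lemma reachable_of_walk :
    ∀ (n : ℕ) (x y : V ⊕ {e // e ∈ E}) (W : (incGraph E).Walk x y) (u w : V) (i j : Fin 2),
      W.length = n → x = Sum.inl u → y = Sum.inl w → i = walkVoltage (incVolt E φ) W j →
      (hypAdj (derivedEdges E φ)).Reachable (u, i) (w, j) := by
  intro n
  induction n using Nat.strong_induction_on with
  | _ n ih =>
    intro x y W u w i j hlen hx hy hvolt
    subst hx
    cases W with
    | nil =>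
      obtain rfl : u = w := Sum.inl.inj hy
      rw [walkVoltage_nil] at hvolt
      simp only [Equiv.Perm.one_apply] at hvolt
      rw [hvolt]
    | cons h W' =>
      rename_i z
      rcases incAdj_elim h with ⟨u', e, hxe, hze, hue⟩ | ⟨u', e, hxe, hze, hue⟩
      swap
      · exact absurd hxe (by simp)
      subst hze
      obtain rfl : u' = u := Sum.inl.inj hxe.symm
      cases W' with
      | nil => exact absurd hy (by simp)
      | cons h' W'' =>
        rename_i z'
        rcases incAdj_elim h' with ⟨u'', e', hze', hz'e, hu''⟩ | ⟨u'', e', hze', hz'e, hu''⟩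
        · exact absurd hze' (by simp)
        subst hz'e
        obtain rfl : e' = e := Sum.inr.inj hze'.symm
        rw [walkVoltage_cons, walkVoltage_cons] at hvolt
        have hvolt' : i = φ u' e'.1 ((φ u'' e'.1)⁻¹ (walkVoltage (incVolt E φ) W'' j)) := by
          rw [hvolt]; simp [incVolt, Equiv.Perm.mul_apply]
        set i' := walkVoltage (incVolt E φ) W'' j with hi'
        have hkey : (φ u' e'.1)⁻¹ i = (φ u'' e'.1)⁻¹ i' := by
          rw [hvolt']
          simp
        have hstep : (hypAdj (derivedEdges E φ)).Reachable (u', i) (u'', i') := by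
          by_cases heq : ((u', i) : V × Fin 2) = (u'', i')
          · rw [heq]
          · refine (derivedAdj_iff.mpr ⟨heq, e'.1, e'.2, (φ u' e'.1)⁻¹ i, hue, hu'', ?_, ?_⟩).reachable
            · simp
            · rw [hkey]; simp
        refine hstep.trans ?_
        rw [SimpleGraph.Walk.length_cons, SimpleGraph.Walk.length_cons] at hlen
        refine ih W''.length ?_ (Sum.inl u'') y W'' u'' w i' j rfl rfl hy hi'
        omega

/-- Projecting a walk in the derived hypergraph down to a walk of the incidence graph. -/
private lemma walk_of_reachable :
    ∀ (p q : V × Fin 2) (D : (hypAdj (derivedEdges E φ)).Walk p q),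
      ∃ W : (incGraph E).Walk (Sum.inl p.1) (Sum.inl q.1),
        p.2 = walkVoltage (incVolt E φ) W q.2 := by
  intro p q D
  induction D with
  | nil => exact ⟨SimpleGraph.Walk.nil, by rw [walkVoltage_nil]; simp⟩
  | @cons a b q h D ih =>
    obtain ⟨W', hW'⟩ := ih
    have h' : (hypAdj (derivedEdges E φ)).Adj (a.1, a.2) (b.1, b.2) := by
      simpa using h
    obtain ⟨-, e, he, t, ha, hb, hi, hj⟩ := derivedAdj_iff.mp h'
    refine ⟨SimpleGraph.Walk.cons (incAdj_inl_inr (e := ⟨e, he⟩) ha)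
      (SimpleGraph.Walk.cons ((incAdj_inl_inr (e := ⟨e, he⟩) hb).symm) W'), ?_⟩
    rw [walkVoltage_cons, walkVoltage_cons]
    simp only [incVolt, Equiv.Perm.mul_apply]
    rw [← hW', hj, hi]
    simp

private lemma reach_inl_of_hyp (hpre : (hypAdj E).Preconnected) (u w : V) :
    (incGraph E).Reachable (Sum.inl u) (Sum.inl w) := by
  obtain ⟨P⟩ := hpre u w
  induction P with
  | nil => rfl
  | @cons a b c h P ih =>
    rw [hypAdj, SimpleGraph.fromRel_adj] at h
    obtain ⟨e, he, hae, hbe⟩ : ∃ e ∈ E, a ∈ e ∧ b ∈ e := by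
      rcases h.2 with ⟨e, he, h1, h2⟩ | ⟨e, he, h1, h2⟩
      · exact ⟨e, he, h1, h2⟩
      · exact ⟨e, he, h2, h1⟩
    exact ((incAdj_inl_inr (e := ⟨e, he⟩) hae).reachable.trans
      ((incAdj_inl_inr (e := ⟨e, he⟩) hbe).symm.reachable)).trans ih

private lemma reach_to_inl (hcard : ∀ e ∈ E, e.Nonempty) (a : V ⊕ {e // e ∈ E}) :
    ∃ u : V, (incGraph E).Reachable a (Sum.inl u) := by
  cases a with
  | inl u => exact ⟨u, by rfl⟩
  | inr e =>
    obtain ⟨u, hu⟩ := hcard e.1 e.2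
    exact ⟨u, (incAdj_inl_inr (e := e) hu).symm.reachable⟩

end Graphs2

theorem stmt_10 {V : Type*} [Fintype V] [DecidableEq V] {m : ℕ} (hm : 2 ≤ m)
    (E : Finset (Finset V)) (hunif : ∀ e ∈ E, e.card = m)
    (hconn : (hypAdj E).Connected)
    (φ : V → Finset V → Equiv.Perm (Fin 2)) :
    (hypAdj (derivedEdges E φ)).Connected ↔
      ∃ (a : V ⊕ {e // e ∈ E}) (W : (incGraph E).Walk a a),
        W.IsCycle ∧ Odd (swapCount (incVolt E φ) W) := by
  have hsym : ∀ a b, incVolt E φ b a = (incVolt E φ a b)⁻¹ := incVolt_symm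
  constructor
  · intro hd
    obtain ⟨u₀⟩ := hconn.nonempty
    obtain ⟨D⟩ := hd.preconnected (u₀, (0 : Fin 2)) (u₀, 1)
    obtain ⟨W, hW⟩ := walk_of_reachable _ _ D
    simp only at hW
    have hvolt : walkVoltage (incVolt E φ) W = Equiv.swap 0 1 := by
      rcases perm2_cases (walkVoltage (incVolt E φ) W) with h | h
      · rw [h] at hW
        simp only [Equiv.Perm.one_apply] at hW
        exact absurd hW (by decide)
      · exact h
    obtain ⟨a, C, hC, hCodd⟩ := exists_cycle_of_odd_closed (incVolt E φ) hsym W.length _ W rfl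
      (odd_of_voltage _ hvolt)
    exact ⟨a, C, hC, hCodd⟩
  · rintro ⟨a, C, hC, hCodd⟩
    obtain ⟨v₀⟩ := hconn.nonempty
    rw [SimpleGraph.connected_iff]
    refine ⟨?_, ⟨(v₀, 0)⟩⟩
    rintro ⟨u, i⟩ ⟨w, j⟩
    have hne : ∀ e ∈ E, e.Nonempty := fun e he =>
      Finset.card_pos.mp (by rw [hunif e he]; omega)
    obtain ⟨v₁, hR1⟩ := reach_to_inl hne a
    obtain ⟨Q⟩ := ((reach_inl_of_hyp hconn.preconnected u v₁).trans hR1.symm)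
    obtain ⟨W1⟩ := reach_inl_of_hyp hconn.preconnected u w
    have hCv : walkVoltage (incVolt E φ) C = Equiv.swap 0 1 := voltage_of_odd _ hCodd
    by_cases hij : i = walkVoltage (incVolt E φ) W1 j
    · exact reachable_of_walk W1.length _ _ W1 u w i j rfl rfl rfl hij
    · have hi : i = Equiv.swap 0 1 (walkVoltage (incVolt E φ) W1 j) := fin2_ne hij
      have hLv : walkVoltage (incVolt E φ) (Q.append (C.append Q.reverse)) =
          Equiv.swap 0 1 := by
        rw [walkVoltage_append, walkVoltage_append, hCv, walkVoltage_reverse _ hsym]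
        rcases perm2_cases (walkVoltage (incVolt E φ) Q) with h | h <;> rw [h] <;> decide
      refine reachable_of_walk ((Q.append (C.append Q.reverse)).append W1).length _ _
        ((Q.append (C.append Q.reverse)).append W1) u w i j rfl rfl rfl ?_
      rw [walkVoltage_append, hLv]
      rw [Equiv.Perm.mul_apply]
      exact hi
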